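/- arXiv:1503.03996 — 3 statements merged into one kernel-verified Lean document; each statement's English description precedes it below -/
import Mathlib

section
/- (Abstract hp-AFEM convergence) Let $V$ be a normed space, $u\in V$, and let constants $b\in(0,1]$, $B\ge1$, $C_1,C_2>0$, $\mu\in(0,1)$, $\omega>0$ satisfy $C_1C_2 < b(1-\mu)$ and $\omega\in(C_2/b,(1-\mu)/C_1)$. Suppose a sequence $(\bar u_i)_{i\ge0}\subset V$, a sequence of partitions $(\mathcal{D}_i)_{i\ge1}$, and error functionals $E_{\mathcal{D}}:\,V\to[0,\infty)$ satisfy: (i) $\|u-\bar u_0\|_V\le\varepsilon_0$; (ii) $E_{\mathcal{D}_i}(\bar u_{i-1})^{1/2}\le\omega\varepsilon_{i-1}$; (iii) $\|u(\mathcal{D}_i)-\bar u_i\|_V\le\mu\varepsilon_{i-1}$ where $u(\mathcal{D}_i)\in V$ satisfies $\|u-u(\mathcal{D}_i)\|_V \le C_1 E_{\mathcal{D}_i}(\bar u_{i-1})^{1/2}$; (iv) $|E_{\mathcal{D}}(v)^{1/2}-E_{\mathcal{D}}(w)^{1/2}|\le C_2\|v-w\|_V$ for all $\mathcal{D}, v,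 w$; with $\varepsilon_i:=(\mu+C_1\omega)\varepsilon_{i-1}$. Then for all $i\ge0$, $\|u-\bar u_i\|_V\le\varepsilon_i$ with $\varepsilon_i=(\mu+C_1\omega)^i\varepsilon_0$ and $\mu+C_1\omega<1$, and for all $i\ge1$, $E_{\mathcal{D}_i}(u)^{1/2}\le(\omega+C_2)\varepsilon_{i-1}$. -/
/-- Abstract convergence of hp-AFEM (Theorem 2.1): under the tolerances of
hp-NEARBEST and PDE, the stability assumption and the Lipschitz assumption,
the iterates converge linearly with factor `μ + C₁ω < 1`, and the error
functional at the produced partitions is controlled. -/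
theorem stmt_12 {V P : Type*} [NormedAddCommGroup V] [NormedSpace ℝ V]
    (u : V) (ub : ℕ → V) (uD : ℕ → V) (𝒟 : ℕ → P)
    (E : P → V → ℝ) (hEnn : ∀ d v, 0 ≤ E d v)
    (b B C₁ C₂ μ ω ε₀ : ℝ)
    (hb : b ∈ Set.Ioc (0:ℝ) 1) (hB : 1 ≤ B)
    (hC₁ : 0 < C₁) (hC₂ : 0 < C₂) (hμ : μ ∈ Set.Ioo (0:ℝ) 1)
    (hcompat : C₁ * C₂ < b * (1 - μ))
    (hω : ω ∈ Set.Ioo (C₂ / b) ((1 - μ) / C₁))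
    (hε₀ : 0 ≤ ε₀)
    (h0 : ‖u - ub 0‖ ≤ ε₀)
    -- (ii) hp-NEARBEST tolerance
    (hnearbest : ∀ i : ℕ,
      Real.sqrt (E (𝒟 (i + 1)) (ub i)) ≤ ω * ((μ + C₁ * ω) ^ i * ε₀))
    -- (iii) PDE-solver tolerance, with `uD (i+1) = u(f_{𝒟_{i+1}}, λ_{𝒟_{i+1}})`
    (hpde : ∀ i : ℕ, ‖uD (i + 1) - ub (i + 1)‖ ≤ μ * ((μ + C₁ * ω) ^ i * ε₀))
    -- data stability assumption (2.2)
    (hstab : ∀ i : ℕ, ‖u - uD (i + 1)‖ ≤ C₁ * Real.sqrt (E (𝒟 (i + 1)) (ub i)))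
    -- (iv) Lipschitz assumption (2.3)
    (hlip : ∀ (d : P) (v w : V),
      |Real.sqrt (E d v) - Real.sqrt (E d w)| ≤ C₂ * ‖v - w‖) :
    μ + C₁ * ω < 1 ∧
    (∀ i : ℕ, ‖u - ub i‖ ≤ (μ + C₁ * ω) ^ i * ε₀) ∧
    (∀ i : ℕ, Real.sqrt (E (𝒟 (i + 1)) u) ≤ (ω + C₂) * ((μ + C₁ * ω) ^ i * ε₀)) := by
  obtain ⟨hω1, hω2⟩ := hω
  have hlt1 : μ + C₁ * ω < 1 := by
    have := (lt_div_iff₀ hC₁).mp hω2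
    nlinarith [mul_comm ω C₁]
  have herr : ∀ i : ℕ, ‖u - ub i‖ ≤ (μ + C₁ * ω) ^ i * ε₀ := by
    intro i
    induction i with
    | zero => simpa using h0
    | succ i ih =>
      have h1 := hstab i
      have h2 := hpde i
      have h3 := hnearbest i
      calc ‖u - ub (i+1)‖ ≤ ‖u - uD (i+1)‖ + ‖uD (i+1) - ub (i+1)‖ := by
            simpa using norm_sub_le_norm_sub_add_norm_sub u (uD (i+1)) (ub (i+1))
        _ ≤ C₁ * (ω * ((μ + C₁ * ω) ^ i * ε₀)) + μ * ((μ + C₁ * ω) ^ i * ε₀) := by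
            have := mul_le_mul_of_nonneg_left h3 hC₁.le
            linarith [le_trans h1 this]
        _ = (μ + C₁ * ω) ^ (i+1) * ε₀ := by ring
  refine ⟨hlt1, herr, fun i => ?_⟩
  have h3 := hnearbest i
  have h4 := hlip (𝒟 (i+1)) u (ub i)
  have h5 := mul_le_mul_of_nonneg_left (herr i) hC₂.le
  have := abs_le.mp h4
  linarith [this.2]
end

section
/- (Instance optimality, counting part of Corollary 3.3) Fix $B>1$ and set $b=\sqrt{\tfrac12(1-\tfrac1B)}$. Let $(\mathcal{D}_N)_{N\ge1}$ be partitions with $\#\mathcal{D}_N=N$ whose errors satisfy $E_{\mathcal{D}_N} \le \frac{2N}{N-n+1}\sigma_n$ for all $n\le N$, where $\sigma_n=\inf\{E_{\hat{\mathcal{D}}}:\#\hat{\mathcal{D}}\le n\}$. Given $\varepsilon>0$, let $N$ be minimal with $E_{\mathcal{D}_N}^{1/2}\le\varepsilon$. Then $N \le B\,\min\{\#\hat{\mathcal{D}} : E_{\hat{\mathcal{D}}}^{1/2} \le b\varepsilon\}$ (provided some $\hat{\mathcal{D}}$ with $E_{\hat{\mathcal{D}}}^{1/2}\le b\varepsilon$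 exists). -/
/-- Counting part of Corollary 3.3: with `b = √(½(1-1/B))`, the first partition
in Binev's sequence reaching error tolerance `ε` has cardinality at most `B`
times that of any partition with error at most `bε`. -/
theorem stmt_13 {P : Type*} (size : P → ℕ) (Err : P → ℝ)
    (hErr : ∀ d, 0 ≤ Err d) (hsize : ∀ d, 1 ≤ size d)
    (B : ℝ) (hB : 1 < B)
    (𝒟 : ℕ → P) (hcard : ∀ N ≥ 1, size (𝒟 N) = N)
    (hinst : ∀ N n : ℕ, 1 ≤ n → n ≤ N →
      Err (𝒟 N) ≤ (2 * N / (N - n + 1 : ℝ)) *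
        sInf {e : ℝ | ∃ d : P, size d ≤ n ∧ e = Err d})
    (ε : ℝ) (hε : 0 < ε)
    (N : ℕ) (hN : 1 ≤ N)
    (hreach : Real.sqrt (Err (𝒟 N)) ≤ ε)
    (hminimal : ∀ m : ℕ, 1 ≤ m → m < N → ε < Real.sqrt (Err (𝒟 m)))
    (dhat : P) (hdhat : Real.sqrt (Err dhat) ≤ Real.sqrt ((1/2) * (1 - 1/B)) * ε) :
    (N : ℝ) ≤ B * (size dhat : ℝ) := by
  set n : ℕ := size dhat with hn
  have hn1 : 1 ≤ n := hsize dhat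
  have hB0 : (0:ℝ) < B := lt_trans one_pos hB
  have hc0 : (0:ℝ) ≤ (1/2) * (1 - 1/B) := by
    have : 1/B ≤ 1 := by
      rw [div_le_one hB0]; exact le_of_lt hB
    nlinarith
  -- Err dhat ≤ c ε²
  have hErrdhat : Err dhat ≤ (1/2) * (1 - 1/B) * ε ^ 2 := by
    have h1 : Real.sqrt (Err dhat) ^ 2 ≤ (Real.sqrt ((1/2) * (1 - 1/B)) * ε) ^ 2 := by
      apply pow_le_pow_left₀ (Real.sqrt_nonneg _) hdhat
    rwa [Real.sq_sqrt (hErr dhat), mul_pow, Real.sq_sqrt hc0] at h1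
  by_contra hcon
  push_neg at hcon
  -- so B * n < N
  have hnN : (n:ℝ) < N := by nlinarith [show (1:ℝ) ≤ (n:ℝ) from by exact_mod_cast hn1]
  have hnNnat : n < N := by exact_mod_cast hnN
  have hN2 : 2 ≤ N := by omega
  -- infimum facts
  set S : Set ℝ := {e : ℝ | ∃ d : P, size d ≤ n ∧ e = Err d} with hS
  have hmem : Err dhat ∈ S := ⟨dhat, le_refl n, rfl⟩
  have hbdd : BddBelow S := ⟨0, fun e ⟨d, _, he⟩ => he ▸ hErr d⟩
  have hσle : sInf S ≤ Err dhat := csInf_le hbdd hmem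
  have hσ0 : 0 ≤ sInf S := le_csInf ⟨_, hmem⟩ (fun e ⟨d, _, he⟩ => he ▸ hErr d)
  -- apply hinst at N-1
  have hkey := hinst (N - 1) n hn1 (by omega)
  have hcast : ((N - 1 : ℕ) : ℝ) = (N : ℝ) - 1 := by
    have := Nat.cast_sub hN (R := ℝ); simpa using this
  rw [hcast] at hkey
  have hden : (0:ℝ) < ((N:ℝ) - 1) - n + 1 := by linarith
  -- Err (𝒟 (N-1)) ≤ ε²
  have hlt : Err (𝒟 (N - 1)) ≤ ε ^ 2 := by
    have h2 : Err (𝒟 (N - 1)) ≤ (2 * ((N:ℝ) - 1) / (((N:ℝ) - 1) - n + 1)) * Err dhat := by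
      refine le_trans hkey ?_
      apply mul_le_mul_of_nonneg_left hσle
      have hNR : (1:ℝ) ≤ (N:ℝ) := by exact_mod_cast hN
      apply div_nonneg <;> linarith
    have h3 : Err (𝒟 (N - 1)) ≤ (2 * ((N:ℝ) - 1) / (((N:ℝ) - 1) - n + 1)) *
        ((1/2) * (1 - 1/B) * ε ^ 2) := by
      refine le_trans h2 ?_
      apply mul_le_mul_of_nonneg_left hErrdhat
      have hNR : (1:ℝ) ≤ (N:ℝ) := by exact_mod_cast hN
      apply div_nonneg <;> linarith
    refine le_trans h3 ?_
    rw [div_mul_eq_mul_div, div_le_iff₀ hden]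
    -- need 2(N-1) * (½(1-1/B)ε²) ≤ ε² * (N - n)
    have hnlt : (n:ℝ) < (N:ℝ) / B := by
      rw [lt_div_iff₀ hB0]; nlinarith
    have hkey2 : 2 * ((N:ℝ) - 1) * ((1/2) * (1 - 1/B)) ≤ ((N:ℝ) - 1) - n + 1 := by
      have h4 : (N:ℝ) * (1 - 1/B) = (N:ℝ) - (N:ℝ)/B := by ring
      have hN1 : (1:ℝ) ≤ N := by exact_mod_cast hN
      nlinarith
    nlinarith [sq_nonneg ε]
  have hsq : Real.sqrt (Err (𝒟 (N - 1))) ≤ ε := by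
    calc Real.sqrt (Err (𝒟 (N - 1))) ≤ Real.sqrt (ε ^ 2) := Real.sqrt_le_sqrt hlt
    _ = ε := by rw [Real.sqrt_sq hε.le]
  exact absurd hsq (not_le.mpr (hminimal (N - 1) (by omega) (by omega)))
end

section
/- Let $\bar\gamma\in(0,1)$, $r, R>0$, and let $u, u_0, u_1$ be elements of an inner product space with energy norm $\vert\!\vert\!\vert\cdot\vert\!\vert\!\vert$, and let $\eta_0,\eta_1\ge0$ satisfy: (a) $\vert\!\vert\!\vert u-u_1\vert\!\vert\!\vert^2=\vert\!\vert\!\vert u-u_0\vert\!\vert\!\vert^2-\vert\!\vert\!\vert u_1-u_0\vert\!\vert\!\vert^2$; (b) for every $\zeta>0$, $\eta_1^2\le(1+\zeta)\bar\gamma\,\eta_0^2+(1+\zeta^{-1})r^{-1}\vert\!\vert\!\vert u_1-u_0\vert\!\vert\!\vert^2$; (c) $\vert\!\vert\!\vert u-u_0\vert\!\vert\!\vert^2\le R\,\eta_0^2$. Then $\vert\!\vert\!\vert u-u_1\vert\!\vert\!\vert^2+(1-\sqrt{\bar\gamma})r\,\eta_1^2 \le \Big[1-\frac{(1-\sqrt{\bar\gamma})^2}{2}\frac{r}{R}\Big]\big(\vert\!\vert\!\vert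 u-u_0\vert\!\vert\!\vert^2+(1-\sqrt{\bar\gamma})r\,\eta_0^2\big), \text{ provided } (1-\sqrt{\bar\gamma})r\le R. -/
/-- Abstract total-error contraction for one AFEM step (Proposition 2.5). -/
theorem stmt_14 {H : Type*} [NormedAddCommGroup H] [InnerProductSpace ℝ H]
    (u u₀ u₁ : H) (η₀ η₁ : ℝ) (hη₀ : 0 ≤ η₀) (hη₁ : 0 ≤ η₁)
    (γ : ℝ) (hγ : γ ∈ Set.Ioo (0:ℝ) 1) (r R : ℝ) (hr : 0 < r) (hR : 0 < R)
    (ha : ‖u - u₁‖ ^ 2 = ‖u - u₀‖ ^ 2 - ‖u₁ - u₀‖ ^ 2)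
    (hb : ∀ ζ : ℝ, 0 < ζ →
      η₁ ^ 2 ≤ (1 + ζ) * γ * η₀ ^ 2 + (1 + ζ⁻¹) * r⁻¹ * ‖u₁ - u₀‖ ^ 2)
    (hc : ‖u - u₀‖ ^ 2 ≤ R * η₀ ^ 2)
    (hrR : (1 - Real.sqrt γ) * r ≤ R) :
    ‖u - u₁‖ ^ 2 + (1 - Real.sqrt γ) * r * η₁ ^ 2 ≤
      (1 - (1 - Real.sqrt γ) ^ 2 / 2 * (r / R)) *
        (‖u - u₀‖ ^ 2 + (1 - Real.sqrt γ) * r * η₀ ^ 2) := by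
  obtain ⟨hγ0, hγ1⟩ := hγ
  set s := Real.sqrt γ with hs
  have hs0 : 0 < s := Real.sqrt_pos.mpr hγ0
  have hs1 : s < 1 := by
    rw [hs, show (1:ℝ) = Real.sqrt 1 by simp]
    exact Real.sqrt_lt_sqrt hγ0.le hγ1
  have hsγ : s * s = γ := Real.mul_self_sqrt hγ0.le
  have hsne : s ≠ 0 := ne_of_gt hs0
  have h1s : (0:ℝ) < 1 - s := by linarith
  have h1sne : (1:ℝ) - s ≠ 0 := ne_of_gt h1s
  have hrne : r ≠ 0 := ne_of_gt hr
  have hζ : 0 < s⁻¹ - 1 := by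
    have : 1 < s⁻¹ := (one_lt_inv₀ hs0).mpr hs1
    linarith
  have hb' := hb (s⁻¹ - 1) hζ
  set d := ‖u₁ - u₀‖ ^ 2 with hd
  have hd0 : 0 ≤ d := by positivity
  have e1 : (1 + (s⁻¹ - 1)) * γ = s := by
    field_simp
    nlinarith [hsγ]
  have e2 : (1 + (s⁻¹ - 1)⁻¹) * r⁻¹ = ((1 - s) * r)⁻¹ := by
    rw [show s⁻¹ - 1 = (1 - s) / s by field_simp]
    field_simp
    ring
  rw [e1, e2] at hb'
  have h1 : (1 - s) * r * η₁ ^ 2 ≤ (1 - s) * r * (s * η₀ ^ 2) + d := by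
    have hpos : 0 < (1 - s) * r := mul_pos h1s hr
    have := mul_le_mul_of_nonneg_left hb' hpos.le
    calc (1 - s) * r * η₁ ^ 2 ≤ (1 - s) * r * (s * η₀ ^ 2 + ((1 - s) * r)⁻¹ * d) := this
      _ = (1 - s) * r * (s * η₀ ^ 2) + d := by
          field_simp
  rw [ha]
  have hrR' : (1 - s) * r ≤ R := hrR
  have hRr : R * (r / R) = r := by field_simp
  have key : ‖u - u₀‖ ^ 2 + (1 - s) * r * (s * η₀ ^ 2) ≤
      (1 - (1 - s) ^ 2 / 2 * (r / R)) * (‖u - u₀‖ ^ 2 + (1 - s) * r * η₀ ^ 2) := by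
    rw [← mul_le_mul_iff_right₀ hR]
    have expand : ∀ X : ℝ, R * ((1 - (1 - s) ^ 2 / 2 * (r / R)) * X)
        = R * X - (1 - s) ^ 2 / 2 * r * X := by
      intro X; field_simp
    rw [expand]
    nlinarith [mul_le_mul_of_nonneg_left hc (by positivity : (0:ℝ) ≤ (1 - s) ^ 2 * r / 2),
      mul_le_mul_of_nonneg_left hrR' (by positivity : (0:ℝ) ≤ (1 - s) ^ 2 * r * η₀ ^ 2 / 2)]
  linarith [h1, key]
end
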